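/- Let A_1,…,A_m (m ≥ 2) be pairwise disjoint k-element subsets of a finite abelian group G of order n ≥ 2, and consider the k-regular weak AMD code with equiprobable sources and equiprobable encoding, so that for nonzero Δ ∈ G, ε_Δ = |{g : g ∈ A_i for some i and g+Δ ∈ A_j for some j ≠ i}|/(km). Then the code is simultaneously R-optimal and G-optimal (i.e., the maximum of ε_Δ over nonzero Δ equals both k(m−1)/(n−1) and 1/(km)) if and only if A_1,…,A_m form an (n,m,k,1)-external difference family; in that case n − 1 = k²m(m−1). -/

import Mathlib

/-- The number of "good" encodings for a substitution Δ:
|{g : g ∈ A_i for some i and g+Δ ∈ A_j for some j ≠ i}|. -/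
def goodCount {G : Type*} [AddCommGroup G] [Fintype G] [DecidableEq G] {m : ℕ}
    (A : Fin m → Finset G) (Δ : G) : ℕ :=
  (Finset.univ.filter (fun g : G => ∃ i, g ∈ A i ∧ ∃ j, j ≠ i ∧ g + Δ ∈ A j)).card

open Finset
set_option linter.unusedSectionVars false
set_option linter.unusedVariables false

section Aux
variable {G : Type*} [AddCommGroup G] [Fintype G] [DecidableEq G] {m : ℕ}

lemma pairCard_eq (A : Fin m → Finset G) (i j : Fin m) (Δ : G) :
    ((A i ×ˢ A j).filter (fun xy => xy.1 - xy.2 = Δ)).card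
      = ((A j).filter (fun y => y + Δ ∈ A i)).card := by
  apply Finset.card_bij (fun xy _ => xy.2)
  · intro xy hxy
    simp only [Finset.mem_filter, Finset.mem_product] at hxy ⊢
    obtain ⟨⟨h1, h2⟩, h3⟩ := hxy
    have hx : xy.1 = xy.2 + Δ := by rw [← h3]; abel
    exact ⟨h2, by rwa [← hx]⟩
  · intro a ha b hb hab
    simp only [Finset.mem_filter, Finset.mem_product] at ha hb
    have ha1 : a.1 = a.2 + Δ := by rw [← ha.2]; abel
    have hb1 : b.1 = b.2 + Δ := by rw [← hb.2]; abel
    exact Prod.ext (by rw [ha1, hb1, hab]) hab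
  · intro y hy
    simp only [Finset.mem_filter] at hy
    exact ⟨(y + Δ, y), by simp [Finset.mem_filter, Finset.mem_product, hy.1, hy.2], rfl⟩

lemma goodCount_eq (A : Fin m → Finset G)
    (hdisj : ∀ i j, i ≠ j → Disjoint (A i) (A j)) (Δ : G) :
    goodCount A Δ = ∑ i, ∑ j, if i ≠ j then
      ((A i ×ˢ A j).filter (fun xy => xy.1 - xy.2 = Δ)).card else 0 := by
  have hset : Finset.univ.filter (fun g : G => ∃ i, g ∈ A i ∧ ∃ j, j ≠ i ∧ g + Δ ∈ A j)
      = (Finset.univ.offDiag).biUnion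
          (fun p : Fin m × Fin m => (A p.2).filter (fun y => y + Δ ∈ A p.1)) := by
    ext g
    simp only [Finset.mem_filter, Finset.mem_univ, true_and, Finset.mem_biUnion,
      Finset.mem_offDiag]
    constructor
    · rintro ⟨i, hi, j, hji, hj⟩
      exact ⟨(j, i), hji, hi, hj⟩
    · rintro ⟨p, hp, hg, hgd⟩
      exact ⟨p.2, hg, p.1, hp, hgd⟩
  have hdis : ∀ p ∈ Finset.univ.offDiag, ∀ q ∈ Finset.univ.offDiag, p ≠ q →
      Disjoint ((A (Prod.snd p)).filter (fun y => y + Δ ∈ A p.1))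
               ((A (Prod.snd q)).filter (fun y => y + Δ ∈ A q.1)) := by
    intro p _ q _ hpq
    rw [Finset.disjoint_left]
    intro a ha hb
    simp only [Finset.mem_filter] at ha hb
    by_cases h2 : p.2 = q.2
    · have h1 : p.1 ≠ q.1 := fun h1 => hpq (Prod.ext h1 h2)
      exact (Finset.disjoint_left.mp (hdisj _ _ h1) ha.2) hb.2
    · exact (Finset.disjoint_left.mp (hdisj _ _ h2) ha.1) hb.1
  unfold goodCount
  rw [hset, Finset.card_biUnion hdis]
  have : ∀ i j : Fin m,
      (if i ≠ j then ((A i ×ˢ A j).filter (fun xy => xy.1 - xy.2 = Δ)).card else 0)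
      = (if i ≠ j then ((A j).filter (fun y => y + Δ ∈ A i)).card else 0) := by
    intro i j; split_ifs with h
    · exact pairCard_eq A i j Δ
    · rfl
  simp_rw [this]
  rw [show (Finset.univ : Finset (Fin m)).offDiag = (Finset.univ ×ˢ Finset.univ).filter (fun p : Fin m × Fin m => p.1 ≠ p.2) by ext p; simp, Finset.sum_filter, Finset.sum_product]

lemma sumD_eq (k : ℕ)
    (A : Fin m → Finset G) (hcard : ∀ i, (A i).card = k) :
    (∑ g : G, ∑ i, ∑ j, if i ≠ j then
      ((A i ×ˢ A j).filter (fun xy => xy.1 - xy.2 = g)).card else 0)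
      = k ^ 2 * m * (m - 1) := by
  rw [Finset.sum_comm]
  have h1 : ∀ i : Fin m, (∑ j, ∑ g : G, if i ≠ j then
      ((A i ×ˢ A j).filter (fun xy => xy.1 - xy.2 = g)).card else 0)
      = ∑ j, if i ≠ j then k ^ 2 else 0 := by
    intro i
    apply Finset.sum_congr rfl
    intro j _
    by_cases h : i ≠ j
    · simp only [if_pos h]
      have := (Finset.card_eq_sum_card_fiberwise
        (f := fun xy : G × G => xy.1 - xy.2) (s := A i ×ˢ A j) (t := Finset.univ)
        (fun x _ => Finset.mem_univ _)).symm
      rw [this, Finset.card_product, hcard, hcard]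
      ring
    · simp only [if_neg h, Finset.sum_const_zero]
  have step1 : (∑ i : Fin m, ∑ g : G, ∑ j, if i ≠ j then
      ((A i ×ˢ A j).filter (fun xy => xy.1 - xy.2 = g)).card else 0)
      = ∑ i : Fin m, ∑ j, if i ≠ j then k ^ 2 else 0 := by
    refine Finset.sum_congr rfl fun i _ => ?_
    rw [Finset.sum_comm]
    exact h1 i
  rw [step1]
  have h2 : ∀ i : Fin m, (∑ j, if i ≠ j then k ^ 2 else 0) = k ^ 2 * (m - 1) := by
    intro i
    rw [Finset.sum_ite, Finset.sum_const, Finset.sum_const, smul_eq_mul, smul_eq_mul,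
      mul_zero, add_zero]
    have : (Finset.univ.filter (fun j => i ≠ j)).card = m - 1 := by
      have : Finset.univ.filter (fun j : Fin m => i ≠ j) = Finset.univ.erase i := by
        ext j; simp [ne_comm, eq_comm, and_comm]
      rw [this, Finset.card_erase_of_mem (Finset.mem_univ i), Finset.card_univ,
        Fintype.card_fin]
    rw [this, mul_comm]
  simp_rw [h2]
  rw [Finset.sum_const, Finset.card_univ, Fintype.card_fin, smul_eq_mul]
  ring

lemma D_zero (A : Fin m → Finset G)
    (hdisj : ∀ i j, i ≠ j → Disjoint (A i) (A j)) :
    (∑ i, ∑ j, if i ≠ j then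
      ((A i ×ˢ A j).filter (fun xy => xy.1 - xy.2 = (0:G))).card else 0) = 0 := by
  apply Finset.sum_eq_zero; intro i _
  apply Finset.sum_eq_zero; intro j _
  split_ifs with h
  · rw [Finset.card_eq_zero]
    ext xy
    simp only [Finset.mem_filter, Finset.mem_product, Finset.notMem_empty, iff_false]
    rintro ⟨⟨h1, h2⟩, h3⟩
    have : xy.1 = xy.2 := by rwa [sub_eq_zero] at h3
    exact (Finset.disjoint_left.mp (hdisj i j h) h1) (this ▸ h2)
  · rfl

end Aux

/-- The k-regular weak AMD code on pairwise disjoint k-subsets A_1,…,A_m of a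
group of order n is simultaneously R-optimal and G-optimal (the maximum over nonzero Δ of
ε_Δ = |Good(Δ)|/(km) equals both k(m−1)/(n−1) and 1/(km)) iff A_1,…,A_m form an
(n,m,k,1)-EDF; in that case n − 1 = k²m(m−1). -/
theorem stmt12 {G : Type*} [AddCommGroup G] [Fintype G] [DecidableEq G]
    (n m k : ℕ) (hn : Fintype.card G = n) (hn2 : 2 ≤ n) (hm : 2 ≤ m) (hk : 1 ≤ k)
    (A : Fin m → Finset G)
    (hdisj : ∀ i j, i ≠ j → Disjoint (A i) (A j))
    (hcard : ∀ i, (A i).card = k) :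
    ((IsGreatest {x : ℝ | ∃ Δ : G, Δ ≠ 0 ∧ (goodCount A Δ : ℝ) / ((k : ℝ) * (m : ℝ)) = x}
          ((k : ℝ) * ((m : ℝ) - 1) / ((n : ℝ) - 1)) ∧
        IsGreatest {x : ℝ | ∃ Δ : G, Δ ≠ 0 ∧ (goodCount A Δ : ℝ) / ((k : ℝ) * (m : ℝ)) = x}
          (1 / ((k : ℝ) * (m : ℝ))))
      ↔ (∀ g : G, g ≠ 0 →
          (∑ i : Fin m, ∑ j : Fin m,
            if i ≠ j then ((A i ×ˢ A j).filter (fun xy => xy.1 - xy.2 = g)).card else 0) = 1))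
    ∧ ((∀ g : G, g ≠ 0 →
          (∑ i : Fin m, ∑ j : Fin m,
            if i ≠ j then ((A i ×ˢ A j).filter (fun xy => xy.1 - xy.2 = g)).card else 0) = 1)
        → n - 1 = k ^ 2 * m * (m - 1)) := by
  -- notation
  set D : G → ℕ := fun g => ∑ i, ∑ j, if i ≠ j then
    ((A i ×ˢ A j).filter (fun xy => xy.1 - xy.2 = g)).card else 0 with hDdef
  have hgc : ∀ Δ : G, goodCount A Δ = D Δ := fun Δ => goodCount_eq A hdisj Δ
  have hsum : ∑ g : G, D g = k ^ 2 * m * (m - 1) := sumD_eq k A hcard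
  have hD0 : D 0 = 0 := D_zero A hdisj
  have hsum' : ∑ g ∈ Finset.univ.erase (0 : G), D g = k ^ 2 * m * (m - 1) := by
    have := Finset.sum_erase_add Finset.univ D (Finset.mem_univ (0 : G))
    rw [hD0, add_zero] at this
    rw [this, hsum]
  have hcarde : (Finset.univ.erase (0 : G)).card = n - 1 := by
    rw [Finset.card_erase_of_mem (Finset.mem_univ _), Finset.card_univ, hn]
  have hkpos : (0:ℝ) < (k:ℝ) := by exact_mod_cast hk
  have hmpos : (0:ℝ) < (m:ℝ) := by
    have : (0:ℕ) < m := by omega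
    exact_mod_cast this
  have hkm : (0 : ℝ) < (k : ℝ) * (m : ℝ) := mul_pos hkpos hmpos
  have hn1pos : (0:ℝ) < (n:ℝ) - 1 := by
    have : (1:ℝ) < (n:ℝ) := by exact_mod_cast (by omega : 1 < n)
    linarith
  have hm1pos : (0:ℝ) < (m:ℝ) - 1 := by
    have : (1:ℝ) < (m:ℝ) := by exact_mod_cast (by omega : 1 < m)
    linarith
  -- the EDF condition implies the numerical identity
  have hEDF_imp : (∀ g : G, g ≠ 0 → D g = 1) → n - 1 = k ^ 2 * m * (m - 1) := by
    intro hEDF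
    have : ∑ g ∈ Finset.univ.erase (0 : G), D g = (Finset.univ.erase (0 : G)).card := by
      rw [Finset.card_eq_sum_ones]
      exact Finset.sum_congr rfl fun g hg =>
        hEDF g (Finset.ne_of_mem_erase hg)
    rw [this, hcarde] at hsum'
    exact hsum'
  constructor
  · constructor
    · -- forward direction
      rintro ⟨h1, h2⟩
      intro g hg
      show D g = 1
      -- the two greatest values coincide
      have heq : (k : ℝ) * ((m : ℝ) - 1) / ((n : ℝ) - 1) = 1 / ((k : ℝ) * (m : ℝ)) :=
        le_antisymm (h2.2 h1.1) (h1.2 h2.1)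
      -- from heq: (n:ℝ) - 1 = k^2 m (m-1)
      have hnum : (n:ℝ) - 1 = (k:ℝ)^2 * (m:ℝ) * ((m:ℝ) - 1) := by
        rw [div_eq_div_iff hn1pos.ne' hkm.ne'] at heq
        linear_combination -heq
      have hnat : n - 1 = k ^ 2 * m * (m - 1) := by
        have hcast : ((n - 1 : ℕ) : ℝ) = ((k ^ 2 * m * (m - 1) : ℕ) : ℝ) := by
          push_cast [Nat.cast_sub (by omega : 1 ≤ n), Nat.cast_sub (by omega : 1 ≤ m)]
          linear_combination hnum
        exact_mod_cast hcast
      -- each D Δ ≤ 1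
      have hle : ∀ Δ : G, Δ ≠ 0 → D Δ ≤ 1 := by
        intro Δ hΔ
        have hx : ((goodCount A Δ : ℝ)) / ((k:ℝ)*(m:ℝ)) ≤ 1 / ((k:ℝ)*(m:ℝ)) :=
          h2.2 ⟨Δ, hΔ, rfl⟩
        rw [div_le_div_iff₀ hkm hkm, hgc] at hx
        have : (D Δ : ℝ) ≤ 1 := by nlinarith [hkm]
        exact_mod_cast this
      -- sum over erase 0 equals its card; each term ≤ 1 forces all terms = 1
      by_contra hgne
      have hg0 : D g = 0 := by
        have := hle g hg
        omega
      have hglt : ∑ x ∈ Finset.univ.erase (0:G), D x < (Finset.univ.erase (0:G)).card := by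
        rw [Finset.card_eq_sum_ones]
        apply Finset.sum_lt_sum
        · intro i hi
          exact hle i (Finset.ne_of_mem_erase hi)
        · exact ⟨g, Finset.mem_erase.mpr ⟨hg, Finset.mem_univ g⟩, by omega⟩
      rw [hsum', hcarde] at hglt
      omega
    · -- backward direction
      intro hEDF
      have hnat : n - 1 = k ^ 2 * m * (m - 1) := hEDF_imp hEDF
      have hval : ∀ Δ : G, Δ ≠ 0 →
          (goodCount A Δ : ℝ) / ((k:ℝ)*(m:ℝ)) = 1 / ((k:ℝ)*(m:ℝ)) := by
        intro Δ hΔ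
        have hD1 : D Δ = 1 := hEDF Δ hΔ
        rw [hgc, hD1]
        norm_num
      obtain ⟨Δ0, hΔ0⟩ : ∃ Δ0 : G, Δ0 ≠ 0 := by
        have : 1 < Fintype.card G := by omega
        obtain ⟨a, b, hab⟩ := Fintype.one_lt_card_iff.mp this
        rcases eq_or_ne a 0 with h | h
        · exact ⟨b, fun hb => hab (by rw [h, hb])⟩
        · exact ⟨a, h⟩
      have hrval : (k : ℝ) * ((m : ℝ) - 1) / ((n : ℝ) - 1) = 1 / ((k : ℝ) * (m : ℝ)) := by
        have hcast : (n:ℝ) - 1 = (k:ℝ)^2 * (m:ℝ) * ((m:ℝ) - 1) := by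
          have : ((n - 1 : ℕ) : ℝ) = ((k ^ 2 * m * (m - 1) : ℕ) : ℝ) := by
            exact_mod_cast congrArg (Nat.cast : ℕ → ℝ) hnat
          rw [Nat.cast_sub (by omega : 1 ≤ n)] at this
          push_cast [Nat.cast_sub (by omega : 1 ≤ m)] at this
          linarith [this]
        rw [hcast]
        rw [div_eq_div_iff (by positivity) hkm.ne']
        ring
      constructor
      · constructor
        · exact ⟨Δ0, hΔ0, by rw [hval Δ0 hΔ0, hrval]⟩
        · rintro x ⟨Δ, hΔ, rfl⟩
          rw [hval Δ hΔ, hrval]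
      · constructor
        · exact ⟨Δ0, hΔ0, hval Δ0 hΔ0⟩
        · rintro x ⟨Δ, hΔ, rfl⟩
          rw [hval Δ hΔ]
  · exact hEDF_imp
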